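/- arXiv:1702.08247 — 2 statements merged into one kernel-verified Lean document; each statement's English description precedes it below -/
import Mathlib

section
/- Let H̄ be an m×n real matrix (the normalized measurement matrix, m ≥ n) and let p_1,...,p_m ∈ [0,1]. Let P = diag(p_1,...,p_m). Then the expectation over independent Bernoulli variables π_1,...,π_m with π_i ~ Bern(p_i) of det(H̄ᵀ Π H̄), where Π = diag(π_1,...,π_m), equals det(H̄ᵀ P H̄). That is, the expected value of the D-optimality criterion under independent sensor failures (sensor i surviving with probability p_i) equals the D-optimality criterion of the probability-weighted Fisher information matrix. -/
/-!
Expanding `det (Hᵀ * diagonal q * H)` row by row (a Cauchy–Binet expansion) writes it as a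
linear combination of monomials `∏ j, q (c j)`; only injective `c` survive, because otherwise
the minor `H.submatrix c id` has two equal rows, so the determinant is a multi-affine polynomial
in `q`, i.e. a combination of square-free monomials `∏ i ∈ T, q i`. For independent Bernoulli
variables the expectation of such a monomial is `∏ i ∈ T, p i`, so by linearity the expectation
of the determinant is its value at the mean `q = p`.
-/

open Matrix Finset

namespace Matrix

variable {m n R : Type*} [Fintype m] [Fintype n] [DecidableEq n] [CommRing R]

theorem det_mul_eq_sum_prod_mul_det_submatrix (A : Matrix n m R) (B : Matrix m n R) :
    (A * B).det = ∑ c : n → m, (∏ j, A j (c j)) * (B.submatrix c id).det := by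
  have hrows : A * B = of fun j => ∑ i, A j i • B i := by
    ext j k
    simp [mul_apply]
  rw [hrows]
  exact (detRowAlternating.map_sum (fun j i => A j i • B i)).trans
    (sum_congr rfl fun c _ => detRowAlternating.map_smul_univ _ _)

theorem det_transpose_mul_diagonal_mul [DecidableEq m] (H : Matrix m n R) (q : m → R) :
    (Hᵀ * diagonal q * H).det =
      ∑ c ∈ univ.filter (fun c : n → m => Function.Injective c),
        ((∏ j, H (c j) j) * (H.submatrix c id).det) * ∏ i ∈ univ.image c, q i := by
  rw [det_mul_eq_sum_prod_mul_det_submatrix,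
    ← sum_filter_of_ne (p := fun c : n → m => Function.Injective c)]
  · refine sum_congr rfl fun c hc => ?_
    rw [prod_image fun x _ y _ h => (mem_filter.mp hc).2 h]
    simp only [mul_diagonal, transpose_apply, prod_mul_distrib]
    ring
  · intro c _ hdet
    by_contra hc
    obtain ⟨j, j', hjj', hne⟩ := Function.not_injective_iff.mp hc
    exact hdet (by rw [det_zero_of_row_eq hne (by ext k; simp [hjj']), mul_zero])

end Matrix

section BernoulliExpectation

variable {ι R : Type*} [Fintype ι] [DecidableEq ι] [CommRing R]

/-- `E f(π)` for independent `π i ~ Bern (p i)`, summing over the set `S` of indices with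
`π i = 1`. -/
def bernoulliExpectation (p : ι → R) (f : (ι → R) → R) : R :=
  ∑ S ∈ univ.powerset, (∏ i ∈ S, p i) * (∏ i ∈ Sᶜ, (1 - p i)) *
    f (fun i => if i ∈ S then 1 else 0)

theorem bernoulliExpectation_prod (p : ι → R) (g : ι → R → R) :
    bernoulliExpectation p (fun q => ∏ i, g i (q i)) =
      ∏ i, (p i * g i 1 + (1 - p i) * g i 0) := by
  rw [bernoulliExpectation, prod_add]
  refine sum_congr rfl fun S _ => ?_
  simp only [apply_ite, prod_ite, filter_not, filter_mem_eq_inter, univ_inter,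
    ← compl_eq_univ_sdiff, prod_mul_distrib]
  ring

theorem bernoulliExpectation_prod_mem (p : ι → R) (T : Finset ι) :
    bernoulliExpectation p (fun q => ∏ i ∈ T, q i) = ∏ i ∈ T, p i := by
  have h := bernoulliExpectation_prod p (fun i x => if i ∈ T then x else 1)
  simp only [Fintype.prod_ite_mem] at h
  rw [h, ← Fintype.prod_ite_mem T]
  refine prod_congr rfl fun i _ => ?_
  split_ifs <;> ring

theorem bernoulliExpectation_sum_mul_prod {κ : Type*} (p : ι → R) (s : Finset κ) (a : κ → R)
    (T : κ → Finset ι) :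
    bernoulliExpectation p (fun q => ∑ k ∈ s, a k * ∏ i ∈ T k, q i) =
      ∑ k ∈ s, a k * ∏ i ∈ T k, p i := by
  calc bernoulliExpectation p (fun q => ∑ k ∈ s, a k * ∏ i ∈ T k, q i)
      = ∑ k ∈ s, a k * bernoulliExpectation p (fun q => ∏ i ∈ T k, q i) := by
        simp only [bernoulliExpectation, mul_sum]
        rw [sum_comm]
        refine sum_congr rfl fun k _ => sum_congr rfl fun S _ => ?_
        ring
    _ = ∑ k ∈ s, a k * ∏ i ∈ T k, p i := by
        simp only [bernoulliExpectation_prod_mem]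

end BernoulliExpectation

theorem expected_D_optimality_general
    (m n : ℕ) (H : Matrix (Fin m) (Fin n) ℝ)
    (p : Fin m → ℝ) :
    ∑ S ∈ Finset.univ.powerset,
        (∏ i ∈ S, p i) * (∏ i ∈ Sᶜ, (1 - p i)) *
          (Hᵀ * Matrix.diagonal (fun i => if i ∈ S then (1 : ℝ) else 0) * H).det
      = (Hᵀ * Matrix.diagonal p * H).det := by
  change bernoulliExpectation p (fun q => (Hᵀ * diagonal q * H).det) = _
  simp only [det_transpose_mul_diagonal_mul]
  exact bernoulliExpectation_sum_mul_prod p _ _ _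

/-- The expected value of the D-optimality criterion `det (H̄ᵀ Π H̄)` under
independent sensor failures (sensor `i` surviving with probability `p i`)
equals `det (H̄ᵀ P H̄)` with `P = diag (p 1, …, p m)`. -/
theorem expected_D_optimality
    (m n : ℕ) (hmn : m ≥ n) (H : Matrix (Fin m) (Fin n) ℝ)
    (p : Fin m → ℝ) (hp : ∀ i, p i ∈ Set.Icc (0 : ℝ) 1) :
    ∑ S ∈ Finset.univ.powerset,
        (∏ i ∈ S, p i) * (∏ i ∈ Sᶜ, (1 - p i)) *
          (Hᵀ * Matrix.diagonal (fun i => if i ∈ S then (1 : ℝ) else 0) * H).det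
      = (Hᵀ * Matrix.diagonal p * H).det :=
  expected_D_optimality_general m n H p
end

section
/- Let u_1,...,u_m, v_1,...,v_m ∈ ℝ^n with m ≥ n, and let p ∈ [0,1]. Then the expectation over independent Bernoulli variables π_1,...,π_m each distributed as Bern(p) of det(Σ_{i=1}^m π_i u_i v_iᵀ) equals p^n · det(Σ_{i=1}^m u_i v_iᵀ). -/
/-!
By multilinearity of the determinant in the rows, `det (∑ i ∈ S, u i (v i)ᵀ)` is the sum
over maps `r : Fin n → S` of `(∏ a, u (r a) a) * det (v ∘ r)`. Only injective `r` contribute,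
and the probability that a `p`-random set `S` contains the `n`-element range of such an `r`
is `p ^ n`.
-/

open Finset Matrix

theorem det_sum_vecMulVec {R ι n : Type*} [CommRing R] [Fintype n] [DecidableEq n]
    (u v : ι → n → R) (S : Finset ι) :
    (∑ i ∈ S, vecMulVec (u i) (v i)).det
      = ∑ r ∈ Fintype.piFinset fun _ => S, (∏ a, u (r a) a) * (of (v ∘ r)).det := by
  have hrows : ∑ i ∈ S, vecMulVec (u i) (v i) = of fun a => ∑ i ∈ S, u i a • v i := by
    ext a b
    simp [Matrix.sum_apply, vecMulVec_apply]
  rw [hrows]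
  exact ((detRowAlternating (R := R) (n := n)).toMultilinearMap.map_sum_finset
    (fun a i => u i a • v i) fun _ => S).trans
    (sum_congr rfl fun r _ => MultilinearMap.map_smul_univ _ _ _)

theorem det_of_comp_eq_zero_of_not_injective {R ι n : Type*} [CommRing R] [Fintype n]
    [DecidableEq n] (v : ι → n → R) {r : n → ι} (hr : ¬ Function.Injective r) :
    (of (v ∘ r)).det = 0 :=
  detRowAlternating.map_eq_zero_of_not_injective (v ∘ r) fun h => hr h.of_comp

/-- Expand `∏ i, (p + (if i ∉ T then 1 - p else 0)) = p ^ #T` with `Finset.prod_add`. -/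
theorem sum_superset_binomial_weight {ι R : Type*} [Fintype ι] [DecidableEq ι] [CommRing R]
    (p : R) (T : Finset ι) :
    ∑ S ∈ univ.powerset with T ⊆ S, p ^ #S * (1 - p) ^ (Fintype.card ι - #S) = p ^ #T := by
  have hprod := prod_add (fun _ => p) (fun i => if i ∉ T then 1 - p else 0) univ
  have hfactor : ∀ i, p + (if i ∉ T then 1 - p else 0) = if i ∈ T then p else 1 := fun i => by
    by_cases hi : i ∈ T <;> simp [hi]
  simp only [hfactor, prod_ite_mem, univ_inter, prod_const] at hprod
  rw [hprod, sum_filter]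
  refine sum_congr rfl fun S _ => ?_
  have hcompl : (∀ i ∈ Sᶜ, i ∉ T) ↔ T ⊆ S := by
    simp only [mem_compl]
    exact ⟨fun h i hi => by_contra fun hiS => h i hiS hi, fun h i hiS hi => hiS (h hi)⟩
  simp only [prod_ite_zero, ← compl_eq_univ_sdiff, hcompl, prod_const, card_compl, mul_ite,
    mul_zero]

theorem expected_det_rank_one_sum_iid_general
    (m n : ℕ) (u v : Fin m → Fin n → ℝ)
    (p : ℝ) :
    ∑ S ∈ Finset.univ.powerset,
        p ^ S.card * (1 - p) ^ (m - S.card) *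
          (∑ i ∈ S, Matrix.vecMulVec (u i) (v i)).det
      = p ^ n * (∑ i : Fin m, Matrix.vecMulVec (u i) (v i)).det := by
  set c : (Fin n → Fin m) → ℝ := fun r => (∏ a, u (r a) a) * (of (v ∘ r)).det
  calc _ = ∑ S ∈ univ.powerset, ∑ r ∈ Fintype.piFinset fun _ => S,
        p ^ #S * (1 - p) ^ (m - #S) * c r := by
        simp_rw [det_sum_vecMulVec, mul_sum]
        rfl
    _ = ∑ r, ∑ S ∈ univ.powerset with univ.image r ⊆ S, p ^ #S * (1 - p) ^ (m - #S) * c r :=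
        sum_comm' fun S r => by simp [image_subset_iff]
    _ = ∑ r, p ^ #(univ.image r) * c r := sum_congr rfl fun r _ => by
        simpa [← sum_mul] using
          congrArg (· * c r) (sum_superset_binomial_weight p (univ.image r))
    _ = ∑ r, p ^ n * c r := sum_congr rfl fun r _ => by
        by_cases hr : Function.Injective r
        · rw [card_image_of_injective _ hr, card_univ, Fintype.card_fin]
        · simp [c, det_of_comp_eq_zero_of_not_injective v hr]
    _ = _ := by rw [← mul_sum, det_sum_vecMulVec, Fintype.piFinset_univ]

/-- For identically distributed Bernoulli variables `π i ~ Bern p`, the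
expectation of `det (∑ i, π i • u i (v i)ᵀ)` equals
`p ^ n * det (∑ i, u i (v i)ᵀ)`. -/
theorem expected_det_rank_one_sum_iid
    (m n : ℕ) (hmn : m ≥ n) (u v : Fin m → Fin n → ℝ)
    (p : ℝ) (hp : p ∈ Set.Icc (0 : ℝ) 1) :
    ∑ S ∈ Finset.univ.powerset,
        p ^ S.card * (1 - p) ^ (m - S.card) *
          (∑ i ∈ S, Matrix.vecMulVec (u i) (v i)).det
      = p ^ n * (∑ i : Fin m, Matrix.vecMulVec (u i) (v i)).det :=
  expected_det_rank_one_sum_iid_general m n u v p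
end
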